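/- With V⁰,…,Vⁿ, d_k, Δ_k, β_k as in the context, let φ : ℝ → ℝ be a continuous function with φ ≥ 0 and φ(0) = 1, and define ν_k to be the trace of φ(Δ_k), where φ(Δ_k) is obtained from the continuous functional calculus applied to the positive self-adjoint operator Δ_k (equivalently, if Δ_k has eigenvalues λ with eigenspace dimensions m_{k,λ}, then ν_k = Σ_λ φ(λ)·m_{k,λ}). Then for every 0 ≤ k ≤ n one has ν_k - ν_{k-1} + … + (-1)^k ν_0 ≥ β_k - β_{k-1} + … + (-1)^k β_0, and equality holds for k = n. -/

import Mathlib

/-!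
Let `g` be `φ` with its value at `0` replaced by `0`, and `t_k = Σ_λ g(λ) · dim E_λ(d_k† d_k)`.
Harmonic forms compute cohomology, so `dim ker Δ_k = β_k`; on nonzero eigenvalues the two
summands of `Δ_k` annihilate each other, and `d† d`, `d d†` have the same nonzero spectrum with
multiplicities. Hence `ν_k = β_k + t_{k-1} + t_k`, the alternating sums telescope to
`Σ (-1)^(k-i) (ν_i - β_i) = t_k ≥ 0`, and `t_n = 0` because `d_n = 0`.
-/

open Module Finset

namespace Module.End

variable {K V W M : Type*} [Field K] [AddCommGroup V] [Module K V] [AddCommGroup W] [Module K W]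
  [AddCommMonoid M]

/-- For diagonalizable `T` this is the trace of `f(T)`. -/
noncomputable def spectralSum (f : K → M) (T : End K V) : M :=
  ∑ᶠ x, finrank K (eigenspace T x) • f x

theorem finrank_eigenspace_eq_card [DecidableEq K] {ι : Type*} [Fintype ι] (b : Basis ι K V)
    (c : ι → K) {T : End K V} (hT : ∀ i, T (b i) = c i • b i) (x : K) :
    finrank K (eigenspace T x) = #{i | c i = x} := by
  have hrepr (v : V) (i : ι) : b.repr (T v) i = c i * b.repr v i := by
    have : Finsupp.lapply i ∘ₗ b.repr.toLinearMap ∘ₗ T =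
        c i • (Finsupp.lapply i ∘ₗ b.repr.toLinearMap) :=
      b.ext fun j => by by_cases h : j = i <;> simp [hT, h]
    exact LinearMap.congr_fun this v
  have hspan : eigenspace T x = Submodule.span K (b '' {i | c i = x}) := by
    refine le_antisymm (fun v hv => b.mem_span_image.mpr fun i hi => ?_) ?_
    · have hcoord := congrArg (fun w => b.repr w i) (mem_eigenspace_iff.mp hv)
      simp only [hrepr, map_smul, Finsupp.smul_apply, smul_eq_mul] at hcoord
      exact (mul_right_cancel₀ (Finsupp.mem_support_iff.mp hi) hcoord :)
    · rw [Submodule.span_le]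
      rintro _ ⟨i, hi, rfl⟩
      exact mem_eigenspace_iff.mpr (hi ▸ hT i)
  rw [hspan, ← Subtype.range_coe_subtype, ← Set.range_comp,
    finrank_span_eq_card (b.linearIndependent.comp _ Subtype.val_injective),
    Fintype.card_subtype]

theorem finite_support_finrank_eigenspace_smul [FiniteDimensional K V] (f : K → M)
    (T : End K V) : (fun x => finrank K (eigenspace T x) • f x).support.Finite :=
  T.finite_hasEigenvalue.subset fun x hx =>
    hasEigenvalue_iff.mpr fun h => by
      rw [Function.mem_support, h, finrank_bot, zero_smul] at hx
      exact hx rfl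

theorem spectralSum_add [FiniteDimensional K V] (f g : K → M) (T : End K V) :
    spectralSum (f + g) T = spectralSum f T + spectralSum g T := by
  simp only [spectralSum, Pi.add_apply, smul_add]
  exact finsum_add_distrib (finite_support_finrank_eigenspace_smul f T)
    (finite_support_finrank_eigenspace_smul g T)

theorem spectralSum_single_zero [DecidableEq K] (a : M) (T : End K V) :
    spectralSum (Pi.single 0 a) T = finrank K (LinearMap.ker T) • a := by
  rw [spectralSum, finsum_eq_single _ 0 fun x hx => by simp [hx], eigenspace_zero,
    Pi.single_eq_same]

theorem spectralSum_eq_update_add [FiniteDimensional K V] [DecidableEq K] (f : K → M)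
    (T : End K V) :
    spectralSum f T =
      spectralSum (Function.update f 0 0) T + finrank K (LinearMap.ker T) • f 0 := by
  have hsplit : f = Function.update f 0 0 + Pi.single 0 (f 0) := by
    ext x
    by_cases hx : x = 0 <;> simp [hx]
  conv_lhs => rw [hsplit]
  rw [spectralSum_add, spectralSum_single_zero]

theorem spectralSum_zero (f : K → M) :
    spectralSum f (0 : End K V) = finrank K V • f 0 := by
  rw [spectralSum, finsum_eq_single _ 0 fun x hx => ?_, eigenspace_zero, LinearMap.ker_zero,
    finrank_top]
  rw [eigenspace_def, zero_sub, LinearMap.ker_neg, LinearMap.ker_smul _ _ hx, one_eq_id,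
    LinearMap.ker_id, finrank_bot, zero_smul]

theorem sum_eq_spectralSum [DecidableEq K] {ι : Type*} [Fintype ι] (b : Basis ι K V)
    (c : ι → K) {T : End K V} (hT : ∀ i, T (b i) = c i • b i) (f : K → M) :
    ∑ i, f (c i) = spectralSum f T := by
  rw [Finset.sum_comp, spectralSum, finsum_eq_sum_of_support_subset _ (s := univ.image c)]
  · simp_rw [finrank_eigenspace_eq_card b c hT]
  · intro x hx
    rw [Function.mem_support, finrank_eigenspace_eq_card b c hT] at hx
    obtain ⟨i, hi⟩ := Finset.card_ne_zero.mp (left_ne_zero_of_smul hx)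
    simpa using ⟨i, (Finset.mem_filter.mp hi).2⟩

theorem spectralSum_nonneg {M : Type*} [AddCommMonoid M] [PartialOrder M]
    [IsOrderedAddMonoid M] {f : K → M} (hf : ∀ x, 0 ≤ f x) (T : End K V) : 0 ≤ spectralSum f T :=
  finsum_nonneg fun x => nsmul_nonneg (hf x) _

theorem eigenspace_le_ker_of_comp_eq_zero {A B : End K V} (hBA : B ∘ₗ A = 0) {x : K}
    (hx : x ≠ 0) : eigenspace A x ≤ LinearMap.ker B := fun v hv => by
  have : x • B v = 0 := by
    rw [← map_smul, ← mem_eigenspace_iff.mp hv, ← LinearMap.comp_apply, hBA,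
      LinearMap.zero_apply]
  exact (smul_eq_zero.mp this).resolve_left hx

theorem eigenspace_add_eq_sup_of_comp_eq_zero {A B : End K V} (hAB : A ∘ₗ B = 0)
    (hBA : B ∘ₗ A = 0) {x : K} (hx : x ≠ 0) :
    eigenspace (A + B) x = eigenspace A x ⊔ eigenspace B x := by
  have hAB' (v : V) : A (B v) = 0 := LinearMap.congr_fun hAB v
  have hBA' (v : V) : B (A v) = 0 := LinearMap.congr_fun hBA v
  refine le_antisymm (fun v hv => ?_) (sup_le (fun v hv => ?_) (fun v hv => ?_))
  · have hv' : A v + B v = x • v := mem_eigenspace_iff.mp hv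
    refine Submodule.mem_sup.mpr ⟨x⁻¹ • A v, ?_, x⁻¹ • B v, ?_, ?_⟩
    · refine mem_eigenspace_iff.mpr ?_
      have := congrArg A hv'
      rw [map_add, hAB', add_zero, map_smul] at this
      rw [map_smul, this, smul_comm]
    · refine mem_eigenspace_iff.mpr ?_
      have := congrArg B hv'
      rw [map_add, hBA', zero_add, map_smul] at this
      rw [map_smul, this, smul_comm]
    · rw [← smul_add, hv', inv_smul_smul₀ hx]
  · rw [mem_eigenspace_iff, LinearMap.add_apply, mem_eigenspace_iff.mp hv,
      eigenspace_le_ker_of_comp_eq_zero hBA hx hv, add_zero]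
  · rw [mem_eigenspace_iff, LinearMap.add_apply, mem_eigenspace_iff.mp hv,
      eigenspace_le_ker_of_comp_eq_zero hAB hx hv, zero_add]

theorem disjoint_eigenspace_of_comp_eq_zero {A B : End K V} (hBA : B ∘ₗ A = 0) {x : K}
    (hx : x ≠ 0) : Disjoint (eigenspace A x) (eigenspace B x) := by
  refine Submodule.disjoint_def.mpr fun v hvA hvB => ?_
  have : x • v = 0 := by
    rw [← mem_eigenspace_iff.mp hvB, eigenspace_le_ker_of_comp_eq_zero hBA hx hvA]
  exact (smul_eq_zero.mp this).resolve_left hx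

theorem finrank_eigenspace_add_of_comp_eq_zero [FiniteDimensional K V] {A B : End K V}
    (hAB : A ∘ₗ B = 0) (hBA : B ∘ₗ A = 0) {x : K} (hx : x ≠ 0) :
    finrank K (eigenspace (A + B) x) =
      finrank K (eigenspace A x) + finrank K (eigenspace B x) := by
  rw [eigenspace_add_eq_sup_of_comp_eq_zero hAB hBA hx,
    ← Submodule.finrank_sup_add_finrank_inf_eq,
    (disjoint_eigenspace_of_comp_eq_zero hBA hx).eq_bot, finrank_bot, add_zero]

theorem finrank_eigenspace_comp_le [FiniteDimensional K W] (f : V →ₗ[K] W) (g : W →ₗ[K] V)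
    {x : K} (hx : x ≠ 0) :
    finrank K (eigenspace (g ∘ₗ f) x) ≤ finrank K (eigenspace (f ∘ₗ g) x) := by
  have hmaps (v : eigenspace (g ∘ₗ f) x) : f v ∈ eigenspace (f ∘ₗ g) x := by
    rw [mem_eigenspace_iff, LinearMap.comp_apply, ← LinearMap.comp_apply g,
      mem_eigenspace_iff.mp v.2, map_smul]
  refine LinearMap.finrank_le_finrank_of_injective
    (f := (f ∘ₗ Submodule.subtype _).codRestrict _ hmaps) fun v w hvw => ?_
  have hfv : f v = f w := congrArg Subtype.val hvw
  have := congrArg (x⁻¹ • g ·) hfv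
  simp only [← LinearMap.comp_apply g, mem_eigenspace_iff.mp v.2, mem_eigenspace_iff.mp w.2,
    inv_smul_smul₀ hx] at this
  exact Subtype.ext this

theorem finrank_eigenspace_comp_comm [FiniteDimensional K V] [FiniteDimensional K W]
    (f : V →ₗ[K] W) (g : W →ₗ[K] V) {x : K} (hx : x ≠ 0) :
    finrank K (eigenspace (g ∘ₗ f) x) = finrank K (eigenspace (f ∘ₗ g) x) :=
  (finrank_eigenspace_comp_le f g hx).antisymm (finrank_eigenspace_comp_le g f hx)

theorem spectralSum_add_of_comp_eq_zero [FiniteDimensional K V] {f : K → M} (hf : f 0 = 0)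
    {A B : End K V} (hAB : A ∘ₗ B = 0) (hBA : B ∘ₗ A = 0) :
    spectralSum f (A + B) = spectralSum f A + spectralSum f B := by
  rw [spectralSum, spectralSum, spectralSum, ← finsum_add_distrib
    (finite_support_finrank_eigenspace_smul f A) (finite_support_finrank_eigenspace_smul f B)]
  refine finsum_congr fun x => ?_
  rcases eq_or_ne x 0 with rfl | hx
  · simp [hf]
  · rw [finrank_eigenspace_add_of_comp_eq_zero hAB hBA hx, add_smul]

theorem spectralSum_comp_comm [FiniteDimensional K V] [FiniteDimensional K W] {f : K → M}
    (hf : f 0 = 0) (S : V →ₗ[K] W) (T : W →ₗ[K] V) :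
    spectralSum f (T ∘ₗ S) = spectralSum f (S ∘ₗ T) := by
  refine finsum_congr fun x => ?_
  rcases eq_or_ne x 0 with rfl | hx
  · simp [hf]
  · rw [finrank_eigenspace_comp_comm S T hx]

end Module.End

namespace LinearMap

open Module.End

variable {𝕜 U V W : Type*} [RCLike 𝕜]
  [NormedAddCommGroup U] [InnerProductSpace 𝕜 U] [FiniteDimensional 𝕜 U]
  [NormedAddCommGroup V] [InnerProductSpace 𝕜 V] [FiniteDimensional 𝕜 V]
  [NormedAddCommGroup W] [InnerProductSpace 𝕜 W] [FiniteDimensional 𝕜 W]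

noncomputable def hodgeLaplacian (d₀ : U →ₗ[𝕜] V) (d₁ : V →ₗ[𝕜] W) : V →ₗ[𝕜] V :=
  d₀ ∘ₗ adjoint d₀ + adjoint d₁ ∘ₗ d₁

theorem ker_hodgeLaplacian (d₀ : U →ₗ[𝕜] V) (d₁ : V →ₗ[𝕜] W) :
    ker (hodgeLaplacian d₀ d₁) = ker (adjoint d₀) ⊓ ker d₁ := by
  ext v
  refine ⟨fun hv => ?_, fun ⟨h₀, h₁⟩ => ?_⟩
  · have hnorm : ‖adjoint d₀ v‖ ^ 2 + ‖d₁ v‖ ^ 2 = 0 := by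
      have := congrArg (fun w => RCLike.re (inner 𝕜 v w)) (mem_ker.mp hv)
      simpa only [hodgeLaplacian, add_apply, comp_apply, inner_add_right,
        ← adjoint_inner_left d₀, adjoint_inner_right d₁, map_add, inner_self_eq_norm_sq,
        inner_zero_right, map_zero] using this
    rw [add_eq_zero_iff_of_nonneg (by positivity) (by positivity)] at hnorm
    simpa using hnorm
  · simp_all [hodgeLaplacian]

theorem finrank_ker_hodgeLaplacian {d₀ : U →ₗ[𝕜] V} {d₁ : V →ₗ[𝕜] W} (h : d₁ ∘ₗ d₀ = 0) :
    finrank 𝕜 (ker (hodgeLaplacian d₀ d₁)) =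
      finrank 𝕜 (ker d₁ ⧸ (range d₀).comap (ker d₁).subtype) := by
  have hle : range d₀ ≤ ker d₁ := range_le_ker_iff.mpr h
  have hharm := Submodule.finrank_add_inf_finrank_orthogonal hle
  have hquot := Submodule.finrank_quotient_add_finrank ((range d₀).comap (ker d₁).subtype)
  rw [(Submodule.comapSubtypeEquivOfLe hle).finrank_eq] at hquot
  rw [ker_hodgeLaplacian, ← orthogonal_range]
  omega

theorem spectralSum_hodgeLaplacian {M : Type*} [AddCommMonoid M] {f : 𝕜 → M} (hf : f 0 = 0)
    {d₀ : U →ₗ[𝕜] V} {d₁ : V →ₗ[𝕜] W} (h : d₁ ∘ₗ d₀ = 0) :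
    spectralSum f (hodgeLaplacian d₀ d₁) =
      spectralSum f (adjoint d₀ ∘ₗ d₀) + spectralSum f (adjoint d₁ ∘ₗ d₁) := by
  have hadj (w : W) : adjoint d₀ (adjoint d₁ w) = 0 := by
    rw [← comp_apply, ← adjoint_comp, h, map_zero, zero_apply]
  have hcomp (u : U) : d₁ (d₀ u) = 0 := LinearMap.congr_fun h u
  rw [hodgeLaplacian, spectralSum_add_of_comp_eq_zero hf, spectralSum_comp_comm hf]
  · ext v
    simp [hadj]
  · ext v
    simp [hcomp]

end LinearMap

theorem Finset.sum_range_alternating_eq_add {R : Type*} [CommRing R] {a b t : ℕ → R}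
    (h₀ : a 0 = b 0 + t 0) (hsucc : ∀ k, a (k + 1) = b (k + 1) + (t k + t (k + 1))) (k : ℕ) :
    ∑ i ∈ range (k + 1), (-1) ^ (k - i) * a i =
      ∑ i ∈ range (k + 1), (-1) ^ (k - i) * b i + t k := by
  have hstep (x : ℕ → R) (k : ℕ) : ∑ i ∈ range (k + 2), (-1) ^ (k + 1 - i) * x i =
      x (k + 1) - ∑ i ∈ range (k + 1), (-1) ^ (k - i) * x i := by
    rw [sum_range_succ, Nat.sub_self, pow_zero, one_mul, sub_eq_add_neg, add_comm,
      ← sum_neg_distrib]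
    refine congrArg _ (sum_congr rfl fun i hi => ?_)
    rw [Nat.sub_add_comm (Nat.le_of_lt_succ (mem_range.mp hi)), pow_succ]
    ring
  induction k with
  | zero => simp [h₀]
  | succ k ih => rw [hstep, hstep, ih, hsucc]; ring

open LinearMap Module.End

theorem analytic_morse_inequalities_general
    (n : ℕ) (V : ℕ → Type*)
    [∀ i, NormedAddCommGroup (V i)] [∀ i, InnerProductSpace ℂ (V i)]
    [∀ i, FiniteDimensional ℂ (V i)]
    (d : ∀ i : ℕ, V i →ₗ[ℂ] V (i + 1))
    (hd : ∀ i : ℕ, (d (i + 1)).comp (d i) = 0)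
    (hdn : d n = 0)
    (Δ : ∀ i : ℕ, V i →ₗ[ℂ] V i)
    (hΔ0 : Δ 0 = (LinearMap.adjoint (d 0)).comp (d 0))
    (hΔ : ∀ i : ℕ, Δ (i + 1) =
      (d i).comp (LinearMap.adjoint (d i)) +
        (LinearMap.adjoint (d (i + 1))).comp (d (i + 1)))
    (β : ℕ → ℕ)
    (hβ0 : β 0 = Module.finrank ℂ (LinearMap.ker (d 0)))
    (hβ : ∀ i : ℕ, β (i + 1) = Module.finrank ℂ
      (LinearMap.ker (d (i + 1)) ⧸
        (LinearMap.range (d i)).comap (LinearMap.ker (d (i + 1))).subtype))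
    (φ : ℝ → ℝ) (hφ0 : ∀ x, 0 ≤ φ x) (hφ1 : φ 0 = 1)
    -- an orthonormal eigenbasis of each `Δ_k`, with (real) eigenvalues `μ k i`
    (e : ∀ k : ℕ, Module.Basis (Fin (Module.finrank ℂ (V k))) ℂ (V k))
    (μ : ∀ k : ℕ, Fin (Module.finrank ℂ (V k)) → ℝ)
    (heig : ∀ k i, Δ k (e k i) = (μ k i : ℂ) • e k i)
    (ν : ℕ → ℝ)
    (hν : ∀ k, ν k = ∑ i, φ (μ k i)) :
    (∀ k ≤ n,
      (∑ i ∈ Finset.range (k + 1), (-1 : ℝ) ^ (k - i) * (β i : ℝ)) ≤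
        ∑ i ∈ Finset.range (k + 1), (-1 : ℝ) ^ (k - i) * ν i) ∧
    (∑ i ∈ Finset.range (n + 1), (-1 : ℝ) ^ (n - i) * (β i : ℝ)) =
      ∑ i ∈ Finset.range (n + 1), (-1 : ℝ) ^ (n - i) * ν i := by
  classical
  obtain ⟨g, hg⟩ : ∃ g : ℂ → ℝ, g = Function.update (fun z => φ z.re) 0 0 := ⟨_, rfl⟩
  obtain ⟨t, ht⟩ : ∃ t : ℕ → ℝ, t = fun k => spectralSum g (adjoint (d k) ∘ₗ d k) := ⟨_, rfl⟩
  have hΔ' : ∀ k, Δ (k + 1) = hodgeLaplacian (d k) (d (k + 1)) := hΔ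
  have hνΔ (k : ℕ) : ν k = β k + spectralSum g (Δ k) := by
    have hker : finrank ℂ (ker (Δ k)) = β k := by
      cases k with
      | zero => rw [hΔ0, ker_adjoint_comp_self, hβ0]
      | succ k => rw [hΔ' k, hβ k, finrank_ker_hodgeLaplacian (hd k)]
    calc ν k = ∑ i, (fun z : ℂ => φ z.re) (μ k i) := by simp [hν]
      _ = spectralSum (fun z => φ z.re) (Δ k) :=
          sum_eq_spectralSum (e k) _ (heig k) (fun z => φ z.re)
      _ = β k + spectralSum g (Δ k) := by
        rw [spectralSum_eq_update_add, hker, ← hg, Complex.zero_re, hφ1, nsmul_one, add_comm]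
  have h₀ : ν 0 = β 0 + t 0 := by rw [hνΔ, hΔ0, ht]
  have hsucc (k : ℕ) : ν (k + 1) = β (k + 1) + (t k + t (k + 1)) := by
    rw [hνΔ, hΔ', spectralSum_hodgeLaplacian (by simp [hg]) (hd k), ht]
  have hg_nonneg (z : ℂ) : 0 ≤ g z := by
    rw [hg]
    by_cases hz : z = 0 <;> simp [hz, hφ0]
  have ht_nonneg (k : ℕ) : 0 ≤ t k := ht ▸ spectralSum_nonneg hg_nonneg _
  have htn : t n = 0 := by simp [ht, hdn, spectralSum_zero, hg]
  have hsum := sum_range_alternating_eq_add (b := fun i => (β i : ℝ)) h₀ hsucc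
  exact ⟨fun k _ => by linarith [hsum k, ht_nonneg k], by linarith [hsum n]⟩

/-- Finite-dimensional analytic Morse inequalities (Proposition 3.1):
for a cochain complex `0 → V⁰ → … → Vⁿ → 0` of finite-dimensional complex inner
product spaces with Hodge Laplacians `Δ_k = d_{k-1} d_{k-1}† + d_k† d_k`, a continuous
function `φ ≥ 0` with `φ(0) = 1`, and `ν_k = Tr φ(Δ_k) = Σ_λ φ(λ)·m_{k,λ}` computed
from an orthonormal eigenbasis of `Δ_k`, the alternating sums of the `ν_k` dominate
the alternating sums of the Betti numbers `β_k = dim (ker d_k / range d_{k-1})`,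
with equality for `k = n`. -/
theorem analytic_morse_inequalities
    (n : ℕ) (V : ℕ → Type*)
    [∀ i, NormedAddCommGroup (V i)] [∀ i, InnerProductSpace ℂ (V i)]
    [∀ i, FiniteDimensional ℂ (V i)]
    (d : ∀ i : ℕ, V i →ₗ[ℂ] V (i + 1))
    (hd : ∀ i : ℕ, (d (i + 1)).comp (d i) = 0)
    (hdn : d n = 0)
    (Δ : ∀ i : ℕ, V i →ₗ[ℂ] V i)
    (hΔ0 : Δ 0 = (LinearMap.adjoint (d 0)).comp (d 0))
    (hΔ : ∀ i : ℕ, Δ (i + 1) =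
      (d i).comp (LinearMap.adjoint (d i)) +
        (LinearMap.adjoint (d (i + 1))).comp (d (i + 1)))
    (β : ℕ → ℕ)
    (hβ0 : β 0 = Module.finrank ℂ (LinearMap.ker (d 0)))
    (hβ : ∀ i : ℕ, β (i + 1) = Module.finrank ℂ
      (LinearMap.ker (d (i + 1)) ⧸
        (LinearMap.range (d i)).comap (LinearMap.ker (d (i + 1))).subtype))
    (φ : ℝ → ℝ) (hφc : Continuous φ) (hφ0 : ∀ x, 0 ≤ φ x) (hφ1 : φ 0 = 1)
    -- an orthonormal eigenbasis of each `Δ_k`, with (real) eigenvalues `μ k i`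
    (e : ∀ k : ℕ, Module.Basis (Fin (Module.finrank ℂ (V k))) ℂ (V k))
    (he : ∀ k, Orthonormal ℂ (e k))
    (μ : ∀ k : ℕ, Fin (Module.finrank ℂ (V k)) → ℝ)
    (heig : ∀ k i, Δ k (e k i) = (μ k i : ℂ) • e k i)
    (ν : ℕ → ℝ)
    (hν : ∀ k, ν k = ∑ i, φ (μ k i)) :
    (∀ k ≤ n,
      (∑ i ∈ Finset.range (k + 1), (-1 : ℝ) ^ (k - i) * (β i : ℝ)) ≤
        ∑ i ∈ Finset.range (k + 1), (-1 : ℝ) ^ (k - i) * ν i) ∧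
    (∑ i ∈ Finset.range (n + 1), (-1 : ℝ) ^ (n - i) * (β i : ℝ)) =
      ∑ i ∈ Finset.range (n + 1), (-1 : ℝ) ^ (n - i) * ν i :=
  analytic_morse_inequalities_general n V d hd hdn Δ hΔ0 hΔ β hβ0 hβ φ hφ0 hφ1 e μ heig ν hν
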